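/- Let q : (G,𝒫) → (H,𝒬) be an (L,C,M)-quasi-isometry of group pairs. If (H,𝒬) has bounded packing, then (G,𝒫) has bounded packing. Here (G,𝒫) has bounded packing if for each D > 0 there is N such that among any N distinct cosets g₁P₁, …, g_NP_N in G/𝒫, at least two satisfy inf{d_G(x,y) : x ∈ g_iP_i, y ∈ g_jP_j} ≥ D. -/

import Mathlib

open scoped Pointwise ENNReal NNReal

namespace CIC

variable {G : Type*} [Group G] {H : Type*} [Group H]

/-- Word length of `g` with respect to the generating set `S`: the least `n` such that `g`
is a product of `n` elements of `S ∪ S⁻¹`. -/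
noncomputable def wordLength (S : Set G) (g : G) : ℕ :=
  sInf {n | ∃ l : List G, (∀ x ∈ l, x ∈ S ∨ x⁻¹ ∈ S) ∧ l.length = n ∧ l.prod = g}

/-- The word metric on `G` associated to the generating set `S`. -/
noncomputable def wdist (S : Set G) (g h : G) : ℕ := wordLength S (g⁻¹ * h)

/-- Closed `r`-neighborhood of `A` with respect to the word metric of `S`. -/
def nbhd (S : Set G) (r : ℝ) (A : Set G) : Set G :=
  {x | ∃ a ∈ A, (wdist S a x : ℝ) ≤ r}

/-- Hausdorff distance between subsets of `G`, valued in `[0,∞]`: the infimum of those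
`r ≥ 0` such that each set is contained in the closed `r`-neighborhood of the other,
the infimum of the empty set being `∞`. -/
noncomputable def hdist (S : Set G) (A B : Set G) : ℝ≥0∞ :=
  ⨅ (r : ℝ≥0) (_ : A ⊆ nbhd S (r : ℝ) B ∧ B ⊆ nbhd S (r : ℝ) A), (r : ℝ≥0∞)

/-- The conjugate subgroup `g P g⁻¹`. -/
def conj (g : G) (P : Subgroup G) : Subgroup G := P.map (MulAut.conj g).toMonoidHom

/-- The set `G/𝒫` of all left cosets `gP` with `g ∈ G` and `P ∈ 𝒫`. -/
def cosets (Ps : Finset (Subgroup G)) : Set (Set G) :=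
  {A | ∃ (g : G) (P : Subgroup G), P ∈ Ps ∧ A = g • (P : Set G)}

/-- A group pair `(G, 𝒫)`: `S` is a finite generating set of `G` and `𝒫` is a finite
collection of infinite subgroups of `G`. -/
structure IsGroupPair (S : Finset G) (Ps : Finset (Subgroup G)) : Prop where
  generates : Subgroup.closure (S : Set G) = ⊤
  infinite : ∀ P ∈ Ps, (P : Set G).Infinite

/-- An `(L,C,M)`-quasi-isometry of group pairs `q : (G,𝒫) → (H,𝒬)`. -/
structure IsPairQI (S : Finset G) (T : Finset H)
    (Ps : Finset (Subgroup G)) (Qs : Finset (Subgroup H))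
    (L C M : ℝ≥0) (q : G → H) : Prop where
  one_le : 1 ≤ L
  lower : ∀ a b : G, (wdist (S : Set G) a b : ℝ) / L - C ≤ (wdist (T : Set H) (q a) (q b) : ℝ)
  upper : ∀ a b : G, (wdist (T : Set H) (q a) (q b) : ℝ) ≤ L * (wdist (S : Set G) a b : ℝ) + C
  dense : ∀ y : H, ∃ x : G, (wdist (T : Set H) (q x) y : ℝ) ≤ C
  coset_fwd : ∀ A ∈ cosets Ps, ∃ B ∈ cosets Qs, hdist (T : Set H) (q '' A) B < (M : ℝ≥0∞)
  coset_bwd : ∀ B ∈ cosets Qs, ∃ A ∈ cosets Ps, hdist (T : Set H) (q '' A) B < (M : ℝ≥0∞)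

/-- `(G,𝒫)` has bounded packing: for each `D > 0` there is `N` such that among any `N`
distinct cosets in `G/𝒫`, at least two are at infimum distance at least `D`. -/
def BoundedPacking (S : Finset G) (Ps : Finset (Subgroup G)) : Prop :=
  ∀ D : ℝ, 0 < D → ∃ N : ℕ, ∀ F : Finset (Set G), ↑F ⊆ cosets Ps → N ≤ F.card →
    ∃ A ∈ F, ∃ B ∈ F, A ≠ B ∧ ∀ x ∈ A, ∀ y ∈ B, D ≤ (wdist (S : Set G) x y : ℝ)

/-! Pick for every coset `A ∈ G/𝒫` a coset `f A ∈ H/𝒬` at Hausdorff distance `< M` from `q A`.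
If `f A = f A'`, every point of `A` lies within `L(2M + C)` of `A'`; since balls of the word
metric are finite, only boundedly many (say `K`) cosets of `G/𝒫` meet a ball of that radius, so
`f` is at most `K`-to-one. Among `KN + 1` cosets of `G/𝒫` there are therefore `N` with distinct
images, two of which are `(LD + C + 2M)`-separated by bounded packing of `(H, 𝒬)`, and the upper
quasi-isometry bound turns this into `D`-separation of their preimages. -/

section WordMetric

variable (S : Set G)

lemma wordLength_le_length {g : G} {l : List G} (hl : ∀ x ∈ l, x ∈ S ∨ x⁻¹ ∈ S)
    (hg : l.prod = g) : wordLength S g ≤ l.length :=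
  Nat.sInf_le ⟨l, hl, rfl, hg⟩

lemma exists_list_length_eq_wordLength (hS : Subgroup.closure S = ⊤) (g : G) :
    ∃ l : List G, (∀ x ∈ l, x ∈ S ∨ x⁻¹ ∈ S) ∧ l.length = wordLength S g ∧ l.prod = g := by
  have hg : g ∈ (Subgroup.closure S).toSubmonoid := by simp [hS]
  rw [Subgroup.closure_toSubmonoid] at hg
  obtain ⟨l, hl, hprod⟩ := Submonoid.exists_list_of_mem_closure hg
  have hne : {n | ∃ l : List G, (∀ x ∈ l, x ∈ S ∨ x⁻¹ ∈ S) ∧ l.length = n ∧ l.prod = g}.Nonempty :=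
    ⟨l.length, l, fun x hx => by simpa using hl x hx, rfl, hprod⟩
  exact Nat.sInf_mem hne

lemma wordLength_inv (g : G) : wordLength S g⁻¹ = wordLength S g := by
  have words_inv : ∀ g : G,
      {n | ∃ l : List G, (∀ x ∈ l, x ∈ S ∨ x⁻¹ ∈ S) ∧ l.length = n ∧ l.prod = g} ⊆
      {n | ∃ l : List G, (∀ x ∈ l, x ∈ S ∨ x⁻¹ ∈ S) ∧ l.length = n ∧ l.prod = g⁻¹} := by
    rintro g _ ⟨l, hl, rfl, rfl⟩
    refine ⟨(l.map (·⁻¹)).reverse, fun x hx => ?_, by simp, (List.prod_inv_reverse l).symm⟩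
    obtain ⟨y, hy, rfl⟩ := List.mem_map.1 (List.mem_reverse.1 hx)
    simpa [or_comm] using hl y hy
  unfold wordLength
  congr 1
  exact subset_antisymm (by simpa using words_inv g⁻¹) (words_inv g)

lemma wdist_comm (a b : G) : wdist S a b = wdist S b a := by
  rw [wdist, wdist, ← wordLength_inv, mul_inv_rev, inv_inv]

lemma wdist_triangle (hS : Subgroup.closure S = ⊤) (a b c : G) :
    wdist S a c ≤ wdist S a b + wdist S b c := by
  obtain ⟨l₁, hl₁, hlen₁, hprod₁⟩ := exists_list_length_eq_wordLength S hS (a⁻¹ * b)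
  obtain ⟨l₂, hl₂, hlen₂, hprod₂⟩ := exists_list_length_eq_wordLength S hS (b⁻¹ * c)
  have h := wordLength_le_length S (g := a⁻¹ * c) (l := l₁ ++ l₂)
    (fun x hx => (List.mem_append.1 hx).elim (hl₁ x) (hl₂ x))
    (by rw [List.prod_append, hprod₁, hprod₂]; group)
  simpa [wdist, hlen₁, hlen₂] using h

lemma finite_setOf_wordLength_le (S : Finset G) (hS : Subgroup.closure (S : Set G) = ⊤) (n : ℕ) :
    {g : G | wordLength (S : Set G) g ≤ n}.Finite := by
  let U := {x : G // x ∈ (S : Set G) ∨ x⁻¹ ∈ (S : Set G)}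
  have : Finite U := (S.finite_toSet.union S.finite_toSet.inv).to_subtype
  refine ((List.finite_length_le U n).image fun l => (l.map Subtype.val).prod).subset ?_
  intro g hg
  obtain ⟨l, hl, hlen, rfl⟩ := exists_list_length_eq_wordLength (S : Set G) hS g
  lift l to List U using hl
  exact ⟨l, by simpa using hlen.trans_le hg, rfl⟩

end WordMetric

section Cosets

variable {S : Set G}

lemma subset_nbhd_of_hdist_lt {A B : Set G} {M : ℝ≥0}
    (h : hdist S A B < M) : A ⊆ nbhd S M B ∧ B ⊆ nbhd S M A := by
  obtain ⟨r, hrM, hAB, hBA⟩ :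
      ∃ r : ℝ≥0, (r : ℝ≥0∞) < M ∧ A ⊆ nbhd S r B ∧ B ⊆ nbhd S r A := by
    simpa [hdist, iInf_lt_iff, and_comm, and_assoc] using h
  have nbhd_mono : ∀ X : Set G, nbhd S r X ⊆ nbhd S M X := fun X _ ⟨a, ha, hax⟩ =>
    ⟨a, ha, hax.trans (by exact_mod_cast hrM.le)⟩
  exact ⟨hAB.trans (nbhd_mono B), hBA.trans (nbhd_mono A)⟩

lemma exists_wdist_le_of_hdist_lt (hS : Subgroup.closure S = ⊤) {M : ℝ≥0} {X Y B : Set G}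
    (hX : hdist S X B < M) (hY : hdist S Y B < M) {x : G} (hx : x ∈ X) :
    ∃ y ∈ Y, (wdist S y x : ℝ) ≤ 2 * M := by
  obtain ⟨b, hb, hbx⟩ := (subset_nbhd_of_hdist_lt hX).1 hx
  obtain ⟨y, hy, hyb⟩ := (subset_nbhd_of_hdist_lt hY).2 hb
  have h : (wdist S y x : ℝ) ≤ wdist S y b + wdist S b x := by
    exact_mod_cast wdist_triangle S hS y b x
  exact ⟨y, hy, by linarith⟩

lemma exists_wdist_le_wdist_add_of_hdist_lt (hS : Subgroup.closure S = ⊤) {M : ℝ≥0}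
    {X Y B B' : Set G} (hX : hdist S X B < M) (hY : hdist S Y B' < M) {x y : G}
    (hx : x ∈ X) (hy : y ∈ Y) :
    ∃ b ∈ B, ∃ b' ∈ B', (wdist S b b' : ℝ) ≤ wdist S x y + 2 * M := by
  obtain ⟨b, hb, hbx⟩ := (subset_nbhd_of_hdist_lt hX).1 hx
  obtain ⟨b', hb', hby⟩ := (subset_nbhd_of_hdist_lt hY).1 hy
  have h : (wdist S b b' : ℝ) ≤ wdist S b x + (wdist S x y + wdist S b' y) := by
    rw [wdist_comm S b' y]
    exact_mod_cast (wdist_triangle S hS b x b').trans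
      (Nat.add_le_add_left (wdist_triangle S hS x y b') _)
  exact ⟨b, hb, b', hb', by linarith⟩

lemma nonempty_of_mem_cosets {Ps : Finset (Subgroup G)} {A : Set G} (hA : A ∈ cosets Ps) :
    A.Nonempty := by
  obtain ⟨g, P, -, rfl⟩ := hA
  exact ⟨g * 1, mem_leftCoset g P.one_mem⟩

lemma exists_card_le_of_forall_exists_wdist_le (S : Finset G)
    (hS : Subgroup.closure (S : Set G) = ⊤) (Ps : Finset (Subgroup G)) (n : ℕ) :
    ∃ K : ℕ, ∀ (x₀ : G) (F : Finset (Set G)), ↑F ⊆ cosets Ps →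
      (∀ A ∈ F, ∃ y ∈ A, wdist (S : Set G) y x₀ ≤ n) → F.card ≤ K := by
  classical
  set ball := (finite_setOf_wordLength_le S hS n).toFinset
  refine ⟨(ball ×ˢ Ps).card, fun x₀ F hF hnear => ?_⟩
  have hsub : F ⊆ (ball ×ˢ Ps).image fun p => (x₀ * p.1⁻¹) • (p.2 : Set G) := by
    intro A hA
    obtain ⟨y, hyA, hy⟩ := hnear A hA
    obtain ⟨g, P, hP, rfl⟩ := hF hA
    have hball : y⁻¹ * x₀ ∈ ball := (Set.Finite.mem_toFinset _).2 hy
    refine Finset.mem_image.2 ⟨(y⁻¹ * x₀, P), Finset.mem_product.2 ⟨hball, hP⟩, ?_⟩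
    rw [mul_inv_rev, inv_inv, mul_inv_cancel_left]
    exact ((leftCoset_eq_iff P).2 ((mem_leftCoset_iff g).1 hyA)).symm
  exact (Finset.card_le_card hsub).trans Finset.card_image_le

end Cosets

namespace IsPairQI

variable {S : Finset G} {T : Finset H} {Ps : Finset (Subgroup G)} {Qs : Finset (Subgroup H)}
  {L C M : ℝ≥0} {q : G → H}

lemma coe_pos (hq : IsPairQI S T Ps Qs L C M q) : (0 : ℝ) < L :=
  zero_lt_one.trans_le (by exact_mod_cast hq.one_le)

lemma wdist_le_mul (hq : IsPairQI S T Ps Qs L C M q) (a b : G) :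
    (wdist (S : Set G) a b : ℝ) ≤ L * (wdist (T : Set H) (q a) (q b) + C) := by
  rw [← div_le_iff₀' hq.coe_pos]
  linarith [hq.lower a b]

lemma exists_wdist_le_of_hdist_lt (hq : IsPairQI S T Ps Qs L C M q)
    (hT : Subgroup.closure (T : Set H) = ⊤) {A A' : Set G} {B : Set H}
    (hA : hdist (T : Set H) (q '' A) B < M) (hA' : hdist (T : Set H) (q '' A') B < M)
    {x : G} (hx : x ∈ A) : ∃ y ∈ A', (wdist (S : Set G) y x : ℝ) ≤ L * (2 * M + C) := by
  obtain ⟨_, ⟨y, hy, rfl⟩, hyx⟩ := CIC.exists_wdist_le_of_hdist_lt hT hA hA' ⟨x, hx, rfl⟩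
  refine ⟨y, hy, (hq.wdist_le_mul y x).trans ?_⟩
  gcongr

lemma le_wdist_of_forall_le_wdist (hq : IsPairQI S T Ps Qs L C M q)
    (hT : Subgroup.closure (T : Set H) = ⊤) {A A' : Set G} {B B' : Set H}
    (hA : hdist (T : Set H) (q '' A) B < M) (hA' : hdist (T : Set H) (q '' A') B' < M) {D : ℝ}
    (hsep : ∀ b ∈ B, ∀ b' ∈ B', L * D + C + 2 * M ≤ (wdist (T : Set H) b b' : ℝ))
    {x y : G} (hx : x ∈ A) (hy : y ∈ A') : D ≤ wdist (S : Set G) x y := by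
  obtain ⟨b, hb, b', hb', hbb'⟩ :=
    exists_wdist_le_wdist_add_of_hdist_lt hT hA hA' (Set.mem_image_of_mem q hx)
      (Set.mem_image_of_mem q hy)
  have h : L * D ≤ L * (wdist (S : Set G) x y : ℝ) := by
    linarith [hsep b hb b' hb', hq.upper x y]
  exact le_of_mul_le_mul_left h hq.coe_pos

end IsPairQI

/-- Bounded packing is a quasi-isometry invariant of group pairs. -/
theorem statement6 (S : Finset G) (T : Finset H)
    (Ps : Finset (Subgroup G)) (Qs : Finset (Subgroup H))
    (hG : IsGroupPair S Ps) (hH : IsGroupPair T Qs)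
    (L C M : ℝ≥0) (q : G → H) (hq : IsPairQI S T Ps Qs L C M q)
    (hbp : BoundedPacking T Qs) :
    BoundedPacking S Ps := by
  classical
  intro D hD
  have hL := hq.coe_pos
  obtain ⟨N, hN⟩ := hbp (L * D + C + 2 * M) (by positivity)
  obtain ⟨K, hK⟩ := exists_card_le_of_forall_exists_wdist_le S hG.generates Ps
    ⌈(L * (2 * M + C) : ℝ)⌉₊
  choose! f hfQ hfM using hq.coset_fwd
  refine ⟨K * N + 1, fun F hF hcard => ?_⟩
  have hfiber : ∀ B ∈ F.image f, (F.filter (f · = B)).card ≤ K := by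
    intro B hB
    obtain ⟨A₀, hA₀, rfl⟩ := Finset.mem_image.1 hB
    obtain ⟨x₀, hx₀⟩ := nonempty_of_mem_cosets (hF hA₀)
    refine hK x₀ _ ((Finset.coe_subset.2 (Finset.filter_subset _ _)).trans hF) fun A hA => ?_
    obtain ⟨hAF, hAB⟩ := Finset.mem_filter.1 hA
    obtain ⟨y, hy, hyx⟩ := hq.exists_wdist_le_of_hdist_lt hH.generates (hfM _ (hF hA₀))
      (hAB ▸ hfM _ (hF hAF)) hx₀
    exact ⟨y, hy, Nat.cast_le.1 (hyx.trans (Nat.le_ceil _))⟩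
  have hcardImage : N ≤ (F.image f).card :=
    (lt_of_mul_lt_mul_left ((Nat.lt_of_succ_le hcard).trans_le
      (F.card_le_mul_card_image K hfiber)) K.zero_le).le
  obtain ⟨B₁, hB₁, B₂, hB₂, hne, hsep⟩ :=
    hN (F.image f) (by simpa [Set.subset_def] using fun A hA => hfQ A (hF hA)) hcardImage
  obtain ⟨A₁, hA₁, rfl⟩ := Finset.mem_image.1 hB₁
  obtain ⟨A₂, hA₂, rfl⟩ := Finset.mem_image.1 hB₂
  exact ⟨A₁, hA₁, A₂, hA₂, fun h => hne (congrArg f h), fun x hx y hy =>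
    hq.le_wdist_of_forall_le_wdist hH.generates (hfM _ (hF hA₁)) (hfM _ (hF hA₂)) hsep hx hy⟩

end CIC
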